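/- Exponential moment of a product of sub-Gaussian variables: let X be sub-Gaussian with variance parameter σ₁² and Y be sub-Gaussian with variance parameter σ₂² (defined on the same probability space, not necessarily independent). Then for all γ with 0 ≤ γ < 1/(4σ₁σ₂), one has E[exp(γXY)] ≤ 3. -/

import Mathlib

/-!
With `s = σ₂ / σ₁`, Young's inequality `γxy ≤ (γ s x² + γ y² / s) / 2` and convexity of `exp`
bound `exp (γXY)` by the average of `exp (c₁X²)` and `exp (c₂Y²)`, where
`2c₁σ₁² = 2c₂σ₂² = 2γσ₁σ₂ < 1/2`. For a sub-Gaussian `X` with variance parameter `v` and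
`2cv < 1`, writing `exp (cx²)` as a Gaussian average of `exp (sx)` and exchanging the integrals
reduces `E[exp (cX²)]` to the bound on the moment generating function, which gives
`E[exp (cX²)] ≤ (1 - 2cv)^(-1/2) ≤ 2`.
-/

open MeasureTheory

noncomputable section

/-- `X` is sub-Gaussian with variance parameter `σ²`:
`log E[exp(tX)] ≤ σ² t²/2` for all `t ∈ ℝ` (in particular all exponential
moments are finite). -/
def SubGaussianPar {Ω : Type*} [MeasurableSpace Ω] (μ : Measure Ω) (X : Ω → ℝ)
    (σ2 : ℝ) : Prop :=
  ∀ t : ℝ, Integrable (fun ω => Real.exp (t * X ω)) μ ∧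
    ∫ ω, Real.exp (t * X ω) ∂μ ≤ Real.exp (σ2 * t ^ 2 / 2)

open Real ENNReal

lemma lintegral_exp_neg_mul_sq_add_mul {b : ℝ} (hb : 0 < b) (x : ℝ) :
    ∫⁻ s : ℝ, ENNReal.ofReal (exp (-b * s ^ 2 + x * s)) =
      ENNReal.ofReal (√(π / b) * exp (x ^ 2 / (4 * b))) := by
  have complete_square : (fun s : ℝ ↦ exp (-b * s ^ 2 + x * s)) =
      fun s ↦ exp (x ^ 2 / (4 * b)) * exp (-b * (s - x / (2 * b)) ^ 2) := by
    funext s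
    rw [← exp_add]
    congr 1
    field_simp
    ring
  have hint : Integrable (fun s : ℝ ↦ exp (-b * s ^ 2 + x * s)) := by
    rw [complete_square]
    exact ((integrable_exp_neg_mul_sq hb).comp_sub_right _).const_mul _
  rw [← ofReal_integral_eq_lintegral_ofReal hint (ae_of_all _ fun s ↦ (exp_pos _).le),
    complete_square, integral_const_mul,
    integral_sub_right_eq_self (fun s ↦ exp (-b * s ^ 2)), integral_gaussian, mul_comm]

lemma exp_mul_mul_le_exp_mul_sq_add_exp_mul_sq {γ s : ℝ} (hγ : 0 ≤ γ) (hs : 0 < s) (x y : ℝ) :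
    exp (γ * x * y) ≤ (exp (γ * s * x ^ 2) + exp (γ / s * y ^ 2)) / 2 := by
  set u := exp (γ * s * x ^ 2 / 2)
  set w := exp (γ / s * y ^ 2 / 2)
  have hxy : γ * x * y ≤ γ * s * x ^ 2 / 2 + γ / s * y ^ 2 / 2 := by
    have hsq : γ * s * x ^ 2 / 2 + γ / s * y ^ 2 / 2 - γ * x * y =
        γ / (2 * s) * (s * x - y) ^ 2 := by
      field_simp
      ring
    nlinarith [mul_nonneg (by positivity : 0 ≤ γ / (2 * s)) (sq_nonneg (s * x - y))]
  calc exp (γ * x * y) ≤ u * w := by rw [← exp_add]; exact exp_le_exp.mpr hxy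
    _ ≤ (u ^ 2 + w ^ 2) / 2 := by nlinarith [sq_nonneg (u - w)]
    _ = (exp (γ * s * x ^ 2) + exp (γ / s * y ^ 2)) / 2 := by
      simp only [u, w, sq, ← exp_add, add_halves]

namespace SubGaussianPar

variable {Ω : Type*} [MeasurableSpace Ω] {μ : Measure Ω} {X : Ω → ℝ} {v : ℝ}

lemma aemeasurable (hX : SubGaussianPar μ X v) : AEMeasurable X μ :=
  aemeasurable_of_aemeasurable_exp_mul one_ne_zero (hX 1).1.aemeasurable

lemma lintegral_exp_mul_le (hX : SubGaussianPar μ X v) (t : ℝ) :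
    ∫⁻ ω, ENNReal.ofReal (exp (t * X ω)) ∂μ ≤ ENNReal.ofReal (exp (v * t ^ 2 / 2)) := by
  rw [← ofReal_integral_eq_lintegral_ofReal (hX t).1 (ae_of_all _ fun ω ↦ (exp_pos _).le)]
  exact ENNReal.ofReal_le_ofReal (hX t).2

lemma lintegral_exp_sq_div_le [SFinite μ] (hX : SubGaussianPar μ X v) {b : ℝ} (hb : 0 < b)
    (hvb : v / 2 < b) :
    ∫⁻ ω, ENNReal.ofReal (√(π / b) * exp (X ω ^ 2 / (4 * b))) ∂μ ≤
      ENNReal.ofReal √(π / (b - v / 2)) := by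
  have hmeas : AEMeasurable (Function.uncurry fun ω (s : ℝ) ↦
      ENNReal.ofReal (exp (-b * s ^ 2 + X ω * s))) (μ.prod volume) := by
    have hX' : AEMeasurable (fun p : Ω × ℝ ↦ X p.1) (μ.prod volume) :=
      hX.aemeasurable.comp_quasiMeasurePreserving Measure.quasiMeasurePreserving_fst
    exact (((aemeasurable_const.mul (measurable_snd.pow_const 2).aemeasurable).add
      (hX'.mul measurable_snd.aemeasurable)).exp).ennreal_ofReal
  have hinner (s : ℝ) : ∫⁻ ω, ENNReal.ofReal (exp (-b * s ^ 2 + X ω * s)) ∂μ ≤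
      ENNReal.ofReal (exp (-(b - v / 2) * s ^ 2)) := by
    calc ∫⁻ ω, ENNReal.ofReal (exp (-b * s ^ 2 + X ω * s)) ∂μ
        = ENNReal.ofReal (exp (-b * s ^ 2)) * ∫⁻ ω, ENNReal.ofReal (exp (s * X ω)) ∂μ := by
          simp_rw [← lintegral_const_mul' _ _ ofReal_ne_top, ← ENNReal.ofReal_mul (exp_pos _).le,
            ← exp_add, mul_comm (X _)]
      _ ≤ ENNReal.ofReal (exp (-b * s ^ 2)) * ENNReal.ofReal (exp (v * s ^ 2 / 2)) := by
          gcongr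
          exact hX.lintegral_exp_mul_le s
      _ = ENNReal.ofReal (exp (-(b - v / 2) * s ^ 2)) := by
          rw [← ENNReal.ofReal_mul (exp_pos _).le, ← exp_add]
          ring_nf
  calc ∫⁻ ω, ENNReal.ofReal (√(π / b) * exp (X ω ^ 2 / (4 * b))) ∂μ
      = ∫⁻ ω, (∫⁻ s : ℝ, ENNReal.ofReal (exp (-b * s ^ 2 + X ω * s))) ∂μ := by
        simp_rw [lintegral_exp_neg_mul_sq_add_mul hb]
    _ = ∫⁻ s : ℝ, ∫⁻ ω, ENNReal.ofReal (exp (-b * s ^ 2 + X ω * s)) ∂μ :=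
        lintegral_lintegral_swap hmeas
    _ ≤ ∫⁻ s : ℝ, ENNReal.ofReal (exp (-(b - v / 2) * s ^ 2)) := lintegral_mono hinner
    _ = ENNReal.ofReal √(π / (b - v / 2)) := by
        simpa using lintegral_exp_neg_mul_sq_add_mul (b := b - v / 2) (by linarith) 0

lemma lintegral_exp_mul_sq_le [SFinite μ] (hX : SubGaussianPar μ X v) {c : ℝ} (hc : 0 < c)
    (hcv : 2 * c * v < 1) :
    ∫⁻ ω, ENNReal.ofReal (exp (c * X ω ^ 2)) ∂μ ≤ ENNReal.ofReal (1 / √(1 - 2 * c * v)) := by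
  set b := 1 / (4 * c) with hb
  have hb0 : 0 < b := by positivity
  have hvb : v / 2 < b := by
    rw [hb, lt_div_iff₀ (by positivity)]
    linarith
  have ha : 0 < √(π / b) := by positivity
  calc ∫⁻ ω, ENNReal.ofReal (exp (c * X ω ^ 2)) ∂μ
      = ∫⁻ ω, ENNReal.ofReal (√(π / b))⁻¹ *
          ENNReal.ofReal (√(π / b) * exp (X ω ^ 2 / (4 * b))) ∂μ := by
        congr 1
        funext ω
        rw [← ENNReal.ofReal_mul (inv_nonneg.mpr ha.le), inv_mul_cancel_left₀ ha.ne', hb]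
        congr 2
        field_simp
    _ = ENNReal.ofReal (√(π / b))⁻¹ *
          ∫⁻ ω, ENNReal.ofReal (√(π / b) * exp (X ω ^ 2 / (4 * b))) ∂μ :=
        lintegral_const_mul' _ _ ofReal_ne_top
    _ ≤ ENNReal.ofReal (√(π / b))⁻¹ * ENNReal.ofReal √(π / (b - v / 2)) := by
        gcongr
        exact hX.lintegral_exp_sq_div_le hb0 hvb
    _ = ENNReal.ofReal (1 / √(1 - 2 * c * v)) := by
        rw [← ENNReal.ofReal_mul (inv_nonneg.mpr ha.le), ← sqrt_inv, ← sqrt_mul (by positivity),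
          one_div, ← sqrt_inv]
        have hbv : b - v / 2 = b * (1 - 2 * c * v) := by
          rw [hb]
          field_simp
          ring
        have : 1 - 2 * c * v ≠ 0 := by linarith
        rw [hbv]
        congr 2
        field_simp

lemma integrable_exp_mul_sq [SFinite μ] (hX : SubGaussianPar μ X v) {c : ℝ} (hc : 0 ≤ c)
    (hcv : 2 * c * v < 1) : Integrable (fun ω ↦ exp (c * X ω ^ 2)) μ := by
  rcases hc.eq_or_lt with rfl | hc
  · simpa using (hX 0).1
  have := hX.aemeasurable
  rw [← lintegral_ofReal_ne_top_iff_integrable (by fun_prop)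
    (ae_of_all _ fun ω ↦ (exp_pos _).le)]
  exact ((hX.lintegral_exp_mul_sq_le hc hcv).trans_lt ofReal_lt_top).ne

lemma integral_exp_mul_sq_le [SFinite μ] (hX : SubGaussianPar μ X v) {c : ℝ} (hc : 0 ≤ c)
    (hcv : 2 * c * v < 1) : ∫ ω, exp (c * X ω ^ 2) ∂μ ≤ 1 / √(1 - 2 * c * v) := by
  rcases hc.eq_or_lt with rfl | hc
  · simpa using (hX 0).2
  have := hX.aemeasurable
  rw [integral_eq_lintegral_of_nonneg_ae (ae_of_all _ fun ω ↦ (exp_pos _).le) (by fun_prop)]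
  exact ENNReal.toReal_le_of_le_ofReal (by positivity) (hX.lintegral_exp_mul_sq_le hc hcv)

end SubGaussianPar

theorem stmt16_general
    {Ω : Type*} [MeasurableSpace Ω] (μ : Measure Ω) [IsProbabilityMeasure μ]
    (X Y : Ω → ℝ)
    (σ1 σ2 : ℝ) (hσ1 : 0 < σ1) (hσ2 : 0 < σ2)
    (hX : SubGaussianPar μ X (σ1 ^ 2)) (hY : SubGaussianPar μ Y (σ2 ^ 2))
    (γ : ℝ) (hγ0 : 0 ≤ γ) (hγ : γ < 1 / (4 * σ1 * σ2)) :
    Integrable (fun ω => Real.exp (γ * X ω * Y ω)) μ ∧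
    ∫ ω, Real.exp (γ * X ω * Y ω) ∂μ ≤ 3 := by
  have hρ : 4 * (γ * σ1 * σ2) < 1 := by
    rw [lt_div_iff₀ (by positivity)] at hγ
    linarith
  have hcX : 2 * (γ * (σ2 / σ1)) * σ1 ^ 2 = 2 * (γ * σ1 * σ2) := by field_simp
  have hcY : 2 * (γ / (σ2 / σ1)) * σ2 ^ 2 = 2 * (γ * σ1 * σ2) := by field_simp
  have hbound : 1 / √(1 - 2 * (γ * σ1 * σ2)) ≤ 2 := by
    have : 1 / 2 ≤ √(1 - 2 * (γ * σ1 * σ2)) := le_sqrt_of_sq_le (by linarith)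
    rw [div_le_iff₀ (by linarith)]
    linarith
  have hIX := hX.integrable_exp_mul_sq (by positivity : 0 ≤ γ * (σ2 / σ1)) (by linarith)
  have hIY := hY.integrable_exp_mul_sq (by positivity : 0 ≤ γ / (σ2 / σ1)) (by linarith)
  have hle (ω : Ω) :=
    exp_mul_mul_le_exp_mul_sq_add_exp_mul_sq hγ0 (by positivity : 0 < σ2 / σ1) (X ω) (Y ω)
  have hint : Integrable (fun ω ↦ exp (γ * X ω * Y ω)) μ := by
    have := hX.aemeasurable
    have := hY.aemeasurable
    exact ((hIX.add hIY).div_const 2).mono' (by fun_prop)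
      (ae_of_all _ fun ω ↦ by rw [norm_of_nonneg (exp_pos _).le]; exact hle ω)
  refine ⟨hint, ?_⟩
  calc ∫ ω, exp (γ * X ω * Y ω) ∂μ
      ≤ (∫ ω, exp (γ * (σ2 / σ1) * X ω ^ 2) ∂μ + ∫ ω, exp (γ / (σ2 / σ1) * Y ω ^ 2) ∂μ) / 2 := by
        rw [← integral_add hIX hIY, ← integral_div]
        exact integral_mono hint ((hIX.add hIY).div_const 2) hle
    _ ≤ (2 + 2) / 2 := by
        gcongr
        · exact (hX.integral_exp_mul_sq_le (by positivity) (by linarith)).trans (hcX ▸ hbound)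
        · exact (hY.integral_exp_mul_sq_le (by positivity) (by linarith)).trans (hcY ▸ hbound)
    _ ≤ 3 := by norm_num

/-- exponential moment of a product of sub-Gaussian random variables:
if `X ∈ G(σ₁²)` and `Y ∈ G(σ₂²)`, then `E[exp(γXY)] ≤ 3` for all `0 ≤ γ < 1/(4σ₁σ₂)`. -/
theorem stmt16
    {Ω : Type*} [MeasurableSpace Ω] (μ : Measure Ω) [IsProbabilityMeasure μ]
    (X Y : Ω → ℝ) (hXm : Measurable X) (hYm : Measurable Y)
    (σ1 σ2 : ℝ) (hσ1 : 0 < σ1) (hσ2 : 0 < σ2)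
    (hX : SubGaussianPar μ X (σ1 ^ 2)) (hY : SubGaussianPar μ Y (σ2 ^ 2))
    (γ : ℝ) (hγ0 : 0 ≤ γ) (hγ : γ < 1 / (4 * σ1 * σ2)) :
    Integrable (fun ω => Real.exp (γ * X ω * Y ω)) μ ∧
    ∫ ω, Real.exp (γ * X ω * Y ω) ∂μ ≤ 3 :=
  stmt16_general μ X Y σ1 σ2 hσ1 hσ2 hX hY γ hγ0 hγ

end
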